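/- Suppose for each l ≤ r there is a color ρ_l, and suppose sets A_0, ..., A_{r−1} ⊆ ω₁ each of order type ω+1 (with top elements α^i_ω) are such that every index-strictly-increasing l-canonical tuple from ⟨A_i⟩ gets color ρ_l under d_l, for every l ≤ r. If ρ_{l'} = ρ_l = ρ for some l' < l ≤ r, then setting x_i = (1/2)·(s_{l'} * ā_i), where ā_i consists of the pairs {α^k_k, α^k_ω} for k < l', the singletons {α^k_{k + i(l−l')}} for l' ≤ k < l, and the singletons {α^k_ω} for l ≤ k < r, the set X = {x_i : i ∈ ω} satisfies f(x + y) = ρ for all x, y ∈ X (repetitions allowed). In particular, for i < j, the tuple b̄_{i,j} consisting of pairs {α^k_k, α^k_ω} for k < l', pairs {α^k_{k+i(l−l')}, α^k_{k+j(l−l')}} for l' ≤ k < l, and singletons {α^k_ω} for l ≤ k < r, is an index-strictly-increasing l-canonical tuple and x_i + x_j = s_l * b̄_{i,j}, while ā_i is an index-strictly-increasing l'-canonical tuple with 2x_i = s_{l'} * ā_i. -/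

import Mathlib

/-- The star operation: `star s a` sends `a m` to `s m` and is `0` elsewhere. -/
noncomputable def star {k : ℕ} (s : Fin k → ℚ) (a : Fin k → Ordinal) : Ordinal →₀ ℚ :=
  ∑ m, Finsupp.single (a m) (s m)

/-- The string `s_{r,l}` of length `r + l`: `2l` many `2`'s followed by
`r − l` many `4`'s. -/
def sStr (r l : ℕ) : Fin (r + l) → ℚ := fun m => if (m : ℕ) < 2 * l then 2 else 4

/-- An `l`-canonical tuple from the blocks `A_k = {α k p : p ∈ ℕ∞}` (with
`α k ⊤` the top element `α^k_ω`), determined by index functions `i` (first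
element of each block) and `i'` (second element of blocks `k < l`): position
`m < 2l` holds the `i (m/2)`-th or `i' (m/2)`-th element of block `m/2` by
parity, and position `m ≥ 2l` holds the `i (m−l)`-th element of block `m−l`. -/
def canonTup (l : ℕ) (α : ℕ → ℕ∞ → Ordinal) (i i' : ℕ → ℕ∞) : ℕ → Ordinal := fun m =>
  if m < 2 * l then (if m % 2 = 0 then α (m / 2) (i (m / 2)) else α (m / 2) (i' (m / 2)))
  else α (m - l) (i (m - l))

/-- `l`-canonicity of the indices: `i_k < i'_k` for `k < l`, and every finite
first index `i_m` (`m < r`) is below every second index `i'_k` (`k < l`). -/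
def IsCanonical (r l : ℕ) (i i' : ℕ → ℕ∞) : Prop :=
  (∀ k < l, i k < i' k) ∧ (∀ k < l, ∀ m < r, i m ≠ ⊤ → i m < i' k)

/-- Index-strict-increasingness: the first indices are weakly increasing, and
strictly increasing among the finite ones. -/
def IndexStrictIncr (r : ℕ) (i : ℕ → ℕ∞) : Prop :=
  ∀ k k', k < k' → k' < r → i k ≤ i k' ∧ (i k ≠ ⊤ → i k < i k')

/-- First indices of the tuple `ā_i`: `k` for `k < l'`, `k + i(l−l')` for
`l' ≤ k < l`, and `ω` (i.e. `⊤`) for `l ≤ k`. -/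
def idxA (l' l : ℕ) (i : ℕ) : ℕ → ℕ∞ := fun k =>
  if k < l' then (k : ℕ∞) else if k < l then ((k + i * (l - l') : ℕ) : ℕ∞) else ⊤

/-- Second indices of the tuple `b̄_{i,j}`: `ω` for `k < l'` and `k + j(l−l')`
for `l' ≤ k < l`. -/
def idxB (l' l : ℕ) (j : ℕ) : ℕ → ℕ∞ := fun k =>
  if k < l' then ⊤ else ((k + j * (l - l') : ℕ) : ℕ∞)

/-- `x_i = (1/2)·(s_{l'} * ā_i)`, where `ā_i` is the `l'`-canonical tuple with
pairs `{α^k_k, α^k_ω}` for `k < l'`, singletons `{α^k_{k+i(l−l')}}` for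
`l' ≤ k < l`, and singletons `{α^k_ω}` for `l ≤ k < r`. -/
noncomputable def xVec (r l l' : ℕ) (α : ℕ → ℕ∞ → Ordinal) (i : ℕ) : Ordinal →₀ ℚ :=
  (2 : ℚ)⁻¹ • star (sStr r l') (fun m : Fin (r + l') => canonTup l' α (idxA l' l i) (fun _ => ⊤) m)

/-! Weighting the pattern `s_l` block by block, `s_{l'} * ā_i` puts `2, 2` on the pair
`{α^k_k, α^k_ω}` of each block `k < l'` and `4` on the single chosen point of each later
block. Halving and adding two of these, `x_i + x_j` puts `2, 2` on the pairs of the blocks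
`k < l'`, `2, 2` on the two points `α^k_{k+i(l−l')}, α^k_{k+j(l−l')}` of the blocks
`l' ≤ k < l`, and `4` on `α^k_ω` for `k ≥ l`: this is `s_l * b̄_{i,j}`. The tuples `ā_i` and
`b̄_{i,j}` share their first indices, which increase by one per block, and for `i < j`
the stride `l − l'` puts every second index `k + j(l−l')` above every finite first index
`m + i(l−l')`, `m < l`; so both are index-strictly-increasing canonical tuples, of colours
`ρ_{l'}` and `ρ_l`. -/

theorem Finset.sum_range_two_mul {M : Type*} [AddCommMonoid M] (g : ℕ → M) (n : ℕ) :
    ∑ m ∈ range (2 * n), g m = ∑ k ∈ range n, (g (2 * k) + g (2 * k + 1)) := by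
  induction n with
  | zero => simp
  | succ n ih =>
    rw [show 2 * (n + 1) = 2 * n + 1 + 1 by omega, sum_range_succ, sum_range_succ,
      sum_range_succ, ih, add_assoc]

noncomputable def canonBlock (l : ℕ) (α : ℕ → ℕ∞ → Ordinal) (i i' : ℕ → ℕ∞) (k : ℕ) :
    Ordinal →₀ ℚ :=
  if k < l then Finsupp.single (α k (i k)) 2 + Finsupp.single (α k (i' k)) 2
  else Finsupp.single (α k (i k)) 4

theorem star_canonTup_eq_sum_canonBlock {r l : ℕ} (hl : l ≤ r) (α : ℕ → ℕ∞ → Ordinal)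
    (i i' : ℕ → ℕ∞) :
    star (sStr r l) (fun m : Fin (r + l) => canonTup l α i i' m) =
      ∑ k ∈ Finset.range r, canonBlock l α i i' k := by
  unfold _root_.star sStr
  rw [Fin.sum_univ_eq_sum_range (fun m =>
      Finsupp.single (canonTup l α i i' m) (if m < 2 * l then (2 : ℚ) else 4)),
    ← Finset.sum_range_add_sum_Ico _ (by omega : 2 * l ≤ r + l),
    ← Finset.sum_range_add_sum_Ico _ hl, Finset.sum_range_two_mul]
  congr 1
  · refine Finset.sum_congr rfl fun k hk => ?_
    have hk : k < l := Finset.mem_range.mp hk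
    simp [canonBlock, canonTup, hk, (by omega : 2 * k < 2 * l),
      (by omega : 2 * k + 1 < 2 * l), (by omega : (2 * k + 1) / 2 = k)]
  · rw [Finset.sum_Ico_eq_sum_range, Finset.sum_Ico_eq_sum_range,
      show r + l - 2 * l = r - l by omega]
    refine Finset.sum_congr rfl fun t _ => ?_
    simp [canonBlock, canonTup, (by omega : 2 * l + t - l = l + t)]

section Witnesses

variable {r l l' : ℕ}

theorem isCanonical_idxA (i : ℕ) : IsCanonical r l' (idxA l' l i) (fun _ => ⊤) :=
  ⟨fun k hk => by simp [idxA, hk], fun _ _ _ _ hne => hne.lt_top⟩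

theorem indexStrictIncr_idxA (i : ℕ) : IndexStrictIncr r (idxA l' l i) := by
  intro k k' hkk' _
  simp only [idxA]
  split_ifs <;> refine ⟨?_, fun hne => ?_⟩ <;>
    first
      | exact le_top
      | exact absurd rfl hne
      | exact WithTop.coe_lt_top _
      | (rw [Nat.cast_le]; omega)
      | (rw [Nat.cast_lt]; omega)
      | omega

theorem isCanonical_idxA_idxB (hl' : l' < l) {i j : ℕ} (hij : i < j) :
    IsCanonical r l (idxA l' l i) (idxB l' l j) := by
  have hstride : i * (l - l') + (l - l') ≤ j * (l - l') := by
    simpa [add_one_mul] using Nat.mul_le_mul_right (l - l') (Nat.succ_le_of_lt hij)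
  constructor
  · intro k hk
    simp only [idxA, idxB]
    split_ifs
    · exact WithTop.coe_lt_top _
    · rw [Nat.cast_lt]; omega
  · intro k hk m _ hne
    simp only [idxA, idxB] at hne ⊢
    split_ifs at hne ⊢ <;>
      first
        | exact absurd rfl hne
        | exact WithTop.coe_lt_top _
        | (rw [Nat.cast_lt]; omega)

theorem canonBlock_idxA_add_canonBlock_idxA (hl' : l' < l) (α : ℕ → ℕ∞ → Ordinal)
    (i j k : ℕ) :
    canonBlock l' α (idxA l' l i) (fun _ => ⊤) k + canonBlock l' α (idxA l' l j) (fun _ => ⊤) k =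
      (2 : ℚ) • canonBlock l α (idxA l' l i) (idxB l' l j) k := by
  by_cases hk' : k < l'
  · simp only [canonBlock, idxA, idxB, hk', hk'.trans hl', if_true]
    rw [← two_smul ℚ]
  by_cases hk : k < l
  · simp only [canonBlock, idxA, idxB, hk, hk', if_true, if_false]
    rw [smul_add, Finsupp.smul_single, Finsupp.smul_single]
    norm_num
  · simp only [canonBlock, idxA, hk, hk', if_false]
    rw [← two_smul ℚ]

theorem two_smul_xVec (α : ℕ → ℕ∞ → Ordinal) (i : ℕ) :
    (2 : ℚ) • xVec r l l' α i =
      star (sStr r l') (fun m : Fin (r + l') => canonTup l' α (idxA l' l i) (fun _ => ⊤) m) := by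
  rw [xVec, smul_smul, mul_inv_cancel₀ two_ne_zero, one_smul]

theorem xVec_add_xVec (hl' : l' < l) (hl : l ≤ r) (α : ℕ → ℕ∞ → Ordinal) (i j : ℕ) :
    xVec r l l' α i + xVec r l l' α j =
      star (sStr r l) (fun m : Fin (r + l) => canonTup l α (idxA l' l i) (idxB l' l j) m) := by
  refine smul_right_injective (Ordinal →₀ ℚ) (two_ne_zero (α := ℚ)) ?_
  simp only [smul_add, two_smul_xVec, star_canonTup_eq_sum_canonBlock (hl'.le.trans hl),
    star_canonTup_eq_sum_canonBlock hl, Finset.smul_sum, ← Finset.sum_add_distrib,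
    canonBlock_idxA_add_canonBlock_idxA hl']

end Witnesses

theorem stmt_15_general (r l l' : ℕ) (hl' : l' < l) (hl : l ≤ r)
    (α : ℕ → ℕ∞ → Ordinal)
    (f : (Ordinal →₀ ℚ) → Fin r) (ρ : ℕ → Fin r)
    (hcol : ∀ lc ≤ r, ∀ i i' : ℕ → ℕ∞, IsCanonical r lc i i' → IndexStrictIncr r i →
      f (star (sStr r lc) (fun m : Fin (r + lc) => canonTup lc α i i' m)) = ρ lc)
    (hρ : ρ l' = ρ l) :
    (∀ i : ℕ, IsCanonical r l' (idxA l' l i) (fun _ => ⊤) ∧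
      IndexStrictIncr r (idxA l' l i) ∧
      (2 : ℚ) • xVec r l l' α i =
        star (sStr r l') (fun m : Fin (r + l') =>
          canonTup l' α (idxA l' l i) (fun _ => ⊤) m)) ∧
    (∀ i j : ℕ, i < j → IsCanonical r l (idxA l' l i) (idxB l' l j) ∧
      xVec r l l' α i + xVec r l l' α j =
        star (sStr r l) (fun m : Fin (r + l) =>
          canonTup l α (idxA l' l i) (idxB l' l j) m)) ∧
    (∀ a ∈ Set.range (xVec r l l' α), ∀ b ∈ Set.range (xVec r l l' α),
      f (a + b) = ρ l') := by
  have hcol_pair : ∀ i j, i < j → f (xVec r l l' α i + xVec r l l' α j) = ρ l' := fun i j hij => by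
    rw [xVec_add_xVec hl' hl, hρ]
    exact hcol l hl _ _ (isCanonical_idxA_idxB hl' hij) (indexStrictIncr_idxA i)
  refine ⟨fun i => ⟨isCanonical_idxA i, indexStrictIncr_idxA i, two_smul_xVec α i⟩,
    fun i j hij => ⟨isCanonical_idxA_idxB hl' hij, xVec_add_xVec hl' hl α i j⟩, ?_⟩
  rintro _ ⟨i, rfl⟩ _ ⟨j, rfl⟩
  rcases lt_trichotomy i j with hij | rfl | hji
  · exact hcol_pair i j hij
  · rw [← two_smul ℚ, two_smul_xVec]
    exact hcol l' (hl'.le.trans hl) _ _ (isCanonical_idxA i) (indexStrictIncr_idxA i)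
  · rw [add_comm]
    exact hcol_pair j i hji

/-- The final step of the proof: if every index-strictly-increasing
`l`-canonical tuple from the (ordered, order type `ω+1`, below `ω₁`) blocks
`⟨A_k : k < r⟩` gets color `ρ_l` under `d_l(ā) = f(s_l * ā)` for every `l ≤ r`,
and `ρ_{l'} = ρ_l` for some `l' < l ≤ r`, then with `x_i = (1/2)·(s_{l'} * ā_i)`
as above: `ā_i` is an index-strictly-increasing `l'`-canonical tuple with
`2x_i = s_{l'} * ā_i`; for `i < j` the tuple `b̄_{i,j}` is an
index-strictly-increasing `l`-canonical tuple with `x_i + x_j = s_l * b̄_{i,j}`;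
and `f(x + y) = ρ_{l'}` for all `x, y ∈ X = {x_i : i ∈ ω}`. -/
theorem stmt_15 (r l l' : ℕ) (hr : 2 ≤ r) (hl' : l' < l) (hl : l ≤ r)
    (α : ℕ → ℕ∞ → Ordinal)
    (hmono : ∀ k, StrictMono (α k))
    (hblocks : ∀ k k' : ℕ, k < k' → ∀ p q : ℕ∞, α k p < α k' q)
    (hbound : ∀ k < r, ∀ p, α k p < (Cardinal.aleph 1).ord)
    (f : (Ordinal →₀ ℚ) → Fin r) (ρ : ℕ → Fin r)
    (hcol : ∀ lc ≤ r, ∀ i i' : ℕ → ℕ∞, IsCanonical r lc i i' → IndexStrictIncr r i →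
      f (star (sStr r lc) (fun m : Fin (r + lc) => canonTup lc α i i' m)) = ρ lc)
    (hρ : ρ l' = ρ l) :
    (∀ i : ℕ, IsCanonical r l' (idxA l' l i) (fun _ => ⊤) ∧
      IndexStrictIncr r (idxA l' l i) ∧
      (2 : ℚ) • xVec r l l' α i =
        star (sStr r l') (fun m : Fin (r + l') =>
          canonTup l' α (idxA l' l i) (fun _ => ⊤) m)) ∧
    (∀ i j : ℕ, i < j → IsCanonical r l (idxA l' l i) (idxB l' l j) ∧
      xVec r l l' α i + xVec r l l' α j =
        star (sStr r l) (fun m : Fin (r + l) =>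
          canonTup l α (idxA l' l i) (idxB l' l j) m)) ∧
    (∀ a ∈ Set.range (xVec r l l' α), ∀ b ∈ Set.range (xVec r l l' α),
      f (a + b) = ρ l') :=
  stmt_15_general r l l' hl' hl α f ρ hcol hρ
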